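/- Let Λ be a finite simple graph in which every vertex has degree at least 3, let x = (u,v) be a dart of Λ and let x⁻¹ = (v,u) be its inverse dart. Then there exists a directed walk from x to x⁻¹ in the dart digraph D(Λ). -/
import Mathlib


/-- `(x, y)` is a 2-dart of `Λ`: the terminal vertex of `x` equals the initial
vertex of `y`, and the initial vertex of `x` differs from the terminal vertex of `y`.
This is exactly the dart relation of the dart digraph `D(Λ)`. -/
def IsTwoDart {V : Type*} (Λ : SimpleGraph V) (x y : Λ.Dart) : Prop :=
  x.toProd.2 = y.toProd.1 ∧ x.toProd.1 ≠ y.toProd.2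

lemma isTwoDart_symm {V : Type*} {Λ : SimpleGraph V} {x y : Λ.Dart}
    (h : IsTwoDart Λ x y) : IsTwoDart Λ y.symm x.symm := by
  obtain ⟨h1, h2⟩ := h
  refine ⟨?_, ?_⟩
  · simpa [SimpleGraph.Dart.symm] using h1.symm
  · simpa [SimpleGraph.Dart.symm] using fun hh => h2 hh.symm

lemma reflTransGen_symm {V : Type*} {Λ : SimpleGraph V} {x y : Λ.Dart}
    (h : Relation.ReflTransGen (IsTwoDart Λ) x y) :
    Relation.ReflTransGen (IsTwoDart Λ) y.symm x.symm := by
  induction h with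
  | refl => exact .refl
  | tail _ hr ih => exact Relation.ReflTransGen.head (isTwoDart_symm hr) ih

/-- In a nonempty step-closed set of darts (degrees ≥ 3), some dart has its
inverse in the set as well. -/
lemma exists_symm_mem {V : Type*} [Fintype V] (Λ : SimpleGraph V)
    [DecidableRel Λ.Adj] (hdeg : ∀ v : V, 3 ≤ Λ.degree v)
    (S : Finset Λ.Dart) (hne : S.Nonempty)
    (hcl : ∀ y ∈ S, ∀ z, IsTwoDart Λ y z → z ∈ S) :
    ∃ y ∈ S, y.symm ∈ S := by
  classical
  by_contra hcon
  push_neg at hcon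
  -- head map is injective on S
  have hinj : Set.InjOn (fun d : Λ.Dart => d.toProd.2) S := by
    intro y hy z hz hyz
    by_contra hne'
    have htail : y.toProd.1 ≠ z.toProd.1 := by
      intro h1
      exact hne' (SimpleGraph.Dart.ext _ _ (Prod.ext h1 hyz))
    -- z steps to y.symm
    have : y.symm ∈ S := by
      refine hcl z hz y.symm ⟨?_, ?_⟩
      · simpa [SimpleGraph.Dart.symm] using hyz.symm
      · simpa [SimpleGraph.Dart.symm] using fun hh => htail hh.symm
    exact hcon y hy this
  -- for each y ∈ S there are two distinct out-darts in S with tail = head y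
  have hout : ∀ y ∈ S, ∃ z₁ ∈ S, ∃ z₂ ∈ S, z₁ ≠ z₂ ∧
      z₁.toProd.1 = y.toProd.2 ∧ z₂.toProd.1 = y.toProd.2 := by
    intro y hy
    set b := y.toProd.2 with hb
    have hcard : 2 ≤ ((Λ.neighborFinset b).erase y.toProd.1).card := by
      have := hdeg b
      have h2 := Finset.pred_card_le_card_erase (a := y.toProd.1)
        (s := Λ.neighborFinset b)
      rw [SimpleGraph.degree] at this
      omega
    obtain ⟨c₁, hc₁, c₂, hc₂, hcc⟩ := Finset.one_lt_card.mp hcard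
    obtain ⟨hc₁ne, hc₁adj⟩ := Finset.mem_erase.mp hc₁
    obtain ⟨hc₂ne, hc₂adj⟩ := Finset.mem_erase.mp hc₂
    rw [SimpleGraph.mem_neighborFinset] at hc₁adj hc₂adj
    refine ⟨⟨(b, c₁), hc₁adj⟩, hcl y hy _ ⟨rfl, fun h => hc₁ne h.symm⟩,
      ⟨(b, c₂), hc₂adj⟩, hcl y hy _ ⟨rfl, fun h => hc₂ne h.symm⟩, ?_, rfl, rfl⟩
    intro h
    exact hcc (congrArg (fun d : Λ.Dart => d.toProd.2) h)
  -- counting: 2 * |S| ≤ |S|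
  have hHcard : (S.image (fun d : Λ.Dart => d.toProd.2)).card = S.card :=
    Finset.card_image_of_injOn hinj
  -- fiberwise count over tails
  have hsum : S.card = ∑ b ∈ S.image (fun d : Λ.Dart => d.toProd.1),
      (S.filter (fun d : Λ.Dart => d.toProd.1 = b)).card := by
    exact Finset.card_eq_sum_card_fiberwise (fun d hd => Finset.mem_image_of_mem _ hd)
  have hsub : S.image (fun d : Λ.Dart => d.toProd.2) ⊆
      S.image (fun d : Λ.Dart => d.toProd.1) := by
    intro b hb
    obtain ⟨y, hy, rfl⟩ := Finset.mem_image.mp hb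
    obtain ⟨z₁, hz₁, _, _, _, hz₁t, _⟩ := hout y hy
    exact Finset.mem_image.mpr ⟨z₁, hz₁, hz₁t⟩
  have hbig : ∀ b ∈ S.image (fun d : Λ.Dart => d.toProd.2),
      2 ≤ (S.filter (fun d : Λ.Dart => d.toProd.1 = b)).card := by
    intro b hb
    obtain ⟨y, hy, rfl⟩ := Finset.mem_image.mp hb
    obtain ⟨z₁, hz₁, z₂, hz₂, hzz, hz₁t, hz₂t⟩ := hout y hy
    refine Finset.one_lt_card.mpr ⟨z₁, ?_, z₂, ?_, hzz⟩ <;>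
      simp [Finset.mem_filter, hz₁, hz₂, hz₁t, hz₂t]
  have h2S : 2 * S.card ≤ S.card := by
    calc 2 * S.card = ∑ _b ∈ S.image (fun d : Λ.Dart => d.toProd.2), 2 := by
          rw [Finset.sum_const, hHcard, smul_eq_mul, mul_comm]
      _ ≤ ∑ b ∈ S.image (fun d : Λ.Dart => d.toProd.2),
            (S.filter (fun d : Λ.Dart => d.toProd.1 = b)).card :=
          Finset.sum_le_sum hbig
      _ ≤ ∑ b ∈ S.image (fun d : Λ.Dart => d.toProd.1),
            (S.filter (fun d : Λ.Dart => d.toProd.1 = b)).card :=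
          Finset.sum_le_sum_of_subset hsub
      _ = S.card := hsum.symm
  have : 0 < S.card := Finset.card_pos.mpr hne
  omega

/-- Any nonempty step-closed set of darts contains a dart from which its
inverse is reachable. -/
lemma exists_reach_symm {V : Type*} [Fintype V] (Λ : SimpleGraph V)
    [DecidableRel Λ.Adj] (hdeg : ∀ v : V, 3 ≤ Λ.degree v) :
    ∀ S : Finset Λ.Dart, S.Nonempty →
      (∀ y ∈ S, ∀ z, IsTwoDart Λ y z → z ∈ S) →
      ∃ y ∈ S, Relation.ReflTransGen (IsTwoDart Λ) y y.symm := by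
  classical
  intro S
  induction S using Finset.strongInduction with
  | _ S ih =>
    intro hne hcl
    by_cases hsc : ∀ y ∈ S, ∀ z ∈ S, Relation.ReflTransGen (IsTwoDart Λ) y z
    · obtain ⟨y, hy, hsymm⟩ := exists_symm_mem Λ hdeg S hne hcl
      exact ⟨y, hy, hsc y hy y.symm hsymm⟩
    · push_neg at hsc
      obtain ⟨y, hy, z, hz, hnr⟩ := hsc
      set T := S.filter (fun w => Relation.ReflTransGen (IsTwoDart Λ) y w) with hT
      have hTsub : T ⊆ S := Finset.filter_subset _ _
      have hTne : y ∈ T := Finset.mem_filter.mpr ⟨hy, .refl⟩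
      have hTcl : ∀ w ∈ T, ∀ z', IsTwoDart Λ w z' → z' ∈ T := by
        intro w hw z' hstep
        obtain ⟨hwS, hwr⟩ := Finset.mem_filter.mp hw
        exact Finset.mem_filter.mpr ⟨hcl w hwS z' hstep, hwr.tail hstep⟩
      have hTlt : T ⊂ S := by
        refine Finset.ssubset_iff_of_subset hTsub |>.mpr ⟨z, hz, ?_⟩
        intro hzT
        exact hnr (Finset.mem_filter.mp hzT).2
      obtain ⟨w, hwT, hwr⟩ := ih T hTlt ⟨y, hTne⟩ hTcl
      exact ⟨w, hTsub hwT, hwr⟩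

/-- In a finite simple graph of minimum degree at least 3, for every dart `x`
there is a directed walk in the dart digraph `D(Λ)` from `x` to its inverse
dart `x⁻¹ = x.symm`. -/
theorem directedWalk_to_inverse_dart {V : Type*} [Fintype V] (Λ : SimpleGraph V)
    [DecidableRel Λ.Adj] (hdeg : ∀ v : V, 3 ≤ Λ.degree v) (x : Λ.Dart) :
    Relation.ReflTransGen (IsTwoDart Λ) x x.symm := by
  classical
  set S : Finset Λ.Dart :=
    Finset.univ.filter (fun y => Relation.ReflTransGen (IsTwoDart Λ) x y) with hS
  have hmem : ∀ y, y ∈ S ↔ Relation.ReflTransGen (IsTwoDart Λ) x y := by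
    intro y; simp [hS]
  obtain ⟨y, hyS, hy⟩ := exists_reach_symm Λ hdeg S ⟨x, (hmem x).mpr .refl⟩
    (fun y hy z hstep => (hmem z).mpr (((hmem y).mp hy).tail hstep))
  have hxy : Relation.ReflTransGen (IsTwoDart Λ) x y := (hmem y).mp hyS
  have hback : Relation.ReflTransGen (IsTwoDart Λ) y.symm x.symm :=
    reflTransGen_symm hxy
  exact (hxy.trans hy).trans hback
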